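/- In a finite MDP, if every state s with μ₀(s) > 0 can reach every other state under some policy (in the sense that there exists d satisfying the Bellman flow constraint with d(s) > 0 for all s), then Slater's condition holds for the constrained problem max_{d ≥ 0, Bellman flow} ∑ d·r̂ − α D_f(d‖d^D), and strong duality holds: the optimal value equals min_V max_{d ≥ 0} of the Lagrangian. -/

import Mathlib

open Filter Topology Finset Matrix

/-!
The objective is concave on the cone `d ≥ 0` and the flow residual is affine, so the pairs
(residual of `d`, a value below the objective at `d`) form a convex set `C ⊆ (S → ℝ) × ℝ`.
Slater's point `d₀` puts some `(0, u₀)` in the interior of `C`: keeping the policy `π` of `d₀`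
fixed and moving the state marginals `y`, the residual becomes `(1 - γ) μ₀ + γ yᵀ P_π - y`, an
affine bijection because `γ P_π` is a contraction for the `ℓ¹` norm, while the objective stays
continuous in `y` near the marginals of `d₀`, being concave on an open set. A hyperplane through
`(0, optimal value)` supporting `C` cannot be vertical, because of that interior point, and its
slope is the multiplier `V`. If the optimal value is `+∞`, weak duality alone gives equality.
-/

theorem Convex.exists_forall_snd_add_le_of_mem_interior {E : Type*} [AddCommGroup E]
    [TopologicalSpace E] [IsTopologicalAddGroup E] [Module ℝ E] [ContinuousSMul ℝ E]
    {C : Set (E × ℝ)} (hC : Convex ℝ C) {u₀ P : ℝ} (hu₀ : ((0 : E), u₀) ∈ interior C)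
    (hP : ∀ u, ((0 : E), u) ∈ C → u ≤ P) :
    ∃ φ : StrongDual ℝ E, ∀ p ∈ C, p.2 + φ p.1 ≤ P := by
  have hPC : ((0 : E), P) ∉ interior C := by
    intro hmem
    have hlim : Tendsto (fun t : ℝ => ((0 : E), P + t)) (𝓝[>] 0) (𝓝 ((0 : E), P)) := by
      have := (tendsto_const_nhds (x := (0 : E))).prodMk_nhds
        ((tendsto_id (x := 𝓝 (0 : ℝ))).const_add P)
      simpa using this.mono_left nhdsWithin_le_nhds
    obtain ⟨t, ht, ht0⟩ :=
      ((hlim.eventually_mem (mem_interior_iff_mem_nhds.1 hmem)).and self_mem_nhdsWithin).exists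
    linarith [hP _ ht, show (0 : ℝ) < t from ht0]
  obtain ⟨ψ, hψ⟩ := geometric_hahn_banach_open_point hC.interior isOpen_interior hPC
  have hψC : ∀ p ∈ C, ψ p ≤ ψ ((0 : E), P) := by
    have hC_sub : C ⊆ closure (interior C) := by
      rw [hC.closure_interior_eq_closure_of_nonempty_interior ⟨_, hu₀⟩]
      exact subset_closure
    exact fun p hp => closure_minimal (fun z hz => (hψ z hz).le)
      (isClosed_le ψ.continuous continuous_const) (hC_sub hp)
  have hψ_apply : ∀ p : E × ℝ, ψ p = ψ (p.1, 0) + p.2 * ψ ((0 : E), 1) := by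
    intro p
    rw [← smul_eq_mul, ← ψ.map_smul, ← ψ.map_add]
    simp
  have hc : 0 < ψ ((0 : E), 1) := by
    have h₁ := hψ _ hu₀
    have h₂ := hP _ (interior_subset hu₀)
    rw [hψ_apply ((0 : E), u₀), hψ_apply ((0 : E), P)] at h₁
    by_contra! hc
    nlinarith
  refine ⟨(ψ ((0 : E), 1))⁻¹ • ψ.comp (ContinuousLinearMap.inl ℝ E ℝ), fun p hp => ?_⟩
  have h := hψC p hp
  rw [hψ_apply p, hψ_apply ((0 : E), P), Prod.mk_zero_zero, map_zero, zero_add] at h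
  have : ψ (p.1, 0) / ψ ((0 : E), 1) ≤ P - p.2 := by rw [div_le_iff₀ hc]; linarith
  simp only [_root_.smul_apply, ContinuousLinearMap.comp_apply, ContinuousLinearMap.inl_apply,
    smul_eq_mul, inv_mul_eq_div]
  linarith

theorem sSup_image_eq_iInf_iSup_of_exists_le {X ι β : Type*} [CompleteLattice β]
    {K F : Set X} (hFK : F ⊆ K) {J : X → β} {L : ι → X → β}
    (hLJ : ∀ i, ∀ x ∈ F, L i x = J x) (hL : ∃ i, ∀ x ∈ K, L i x ≤ sSup (J '' F)) :
    sSup (J '' F) = ⨅ i, ⨆ x : K, L i x := by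
  obtain ⟨i₀, hi₀⟩ := hL
  refine le_antisymm (le_iInf fun i => sSup_le ?_) (iInf_le_of_le i₀ (iSup_le fun x => hi₀ x x.2))
  rintro _ ⟨x, hx, rfl⟩
  exact (hLJ i x hx).ge.trans (le_iSup (fun y : K => L i y) ⟨x, hFK hx⟩)

theorem Matrix.eq_zero_of_eq_smul_vecMul {S : Type*} [Fintype S] {P : Matrix S S ℝ}
    (hP : ∀ i j, 0 ≤ P i j) (hP1 : ∀ i, ∑ j, P i j = 1) {γ : ℝ} (hγ : |γ| < 1)
    {z : S → ℝ} (hz : z = γ • (z ᵥ* P)) : z = 0 := by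
  have hl1 : ∑ j, |(z ᵥ* P) j| ≤ ∑ i, |z i| :=
    calc ∑ j, |∑ i, z i * P i j| ≤ ∑ j, ∑ i, |z i| * P i j :=
          sum_le_sum fun j _ => (abs_sum_le_sum_abs _ _).trans_eq
            (sum_congr rfl fun i _ => by rw [abs_mul, abs_of_nonneg (hP i j)])
      _ = ∑ i, |z i| := by
          rw [sum_comm]
          simp only [← mul_sum, hP1, mul_one]
  have hcontr : ∑ i, |z i| ≤ |γ| * ∑ i, |z i| := by
    conv_lhs => rw [hz]
    simp only [Pi.smul_apply, smul_eq_mul, abs_mul, ← mul_sum]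
    exact mul_le_mul_of_nonneg_left hl1 (abs_nonneg γ)
  have hzero : ∑ i, |z i| = 0 := by
    nlinarith [sum_nonneg fun i (_ : i ∈ univ) => abs_nonneg (z i), abs_nonneg γ]
  funext i
  simpa using (sum_eq_zero_iff_of_nonneg fun i _ => abs_nonneg (z i)).1 hzero i (mem_univ i)

theorem Matrix.surjective_smul_vecMulLinear_sub_id {S : Type*} [Fintype S]
    {P : Matrix S S ℝ} (hP : ∀ i j, 0 ≤ P i j) (hP1 : ∀ i, ∑ j, P i j = 1) {γ : ℝ}
    (hγ : |γ| < 1) : Function.Surjective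
      (γ • P.vecMulLinear - LinearMap.id : (S → ℝ) →ₗ[ℝ] S → ℝ) := by
  refine LinearMap.injective_iff_surjective.1 (LinearMap.ker_eq_bot.1 ?_)
  exact LinearMap.ker_eq_bot'.2 fun z hz =>
    eq_zero_of_eq_smul_vecMul hP hP1 hγ (sub_eq_zero.1 hz).symm

theorem ConvexOn.perspective_combo_le {f : ℝ → ℝ} (hf : ConvexOn ℝ (Set.Ici 0) f)
    {c x y a b : ℝ} (hc : 0 < c) (hx : 0 ≤ x) (hy : 0 ≤ y) (ha : 0 ≤ a) (hb : 0 ≤ b)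
    (hab : a + b = 1) :
    c * f ((a * x + b * y) / c) ≤ a * (c * f (x / c)) + b * (c * f (y / c)) := by
  have h := hf.2 (Set.mem_Ici.2 (div_nonneg hx hc.le)) (Set.mem_Ici.2 (div_nonneg hy hc.le))
    ha hb hab
  simp only [smul_eq_mul, ← mul_div_assoc, ← add_div] at h
  nlinarith [mul_le_mul_of_nonneg_left h hc.le]

section MDP

variable {S A : Type*}

def occupancy (π : S → A → ℝ) : (S → ℝ) →ₗ[ℝ] S → A → ℝ :=
  LinearMap.pi fun s => LinearMap.pi fun a => π s a • LinearMap.proj s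

theorem occupancy_apply (π : S → A → ℝ) (y : S → ℝ) (s : S) (a : A) :
    occupancy π y s a = π s a * y s := rfl

variable [Fintype A]

def policyTransition (T : S → A → S → ℝ) (π : S → A → ℝ) : Matrix S S ℝ :=
  Matrix.of fun s s' => ∑ a, π s a * T s a s'

theorem policyTransition_nonneg {T : S → A → S → ℝ} (hT : ∀ s a s', 0 ≤ T s a s')
    {π : S → A → ℝ} (hπ : ∀ s a, 0 ≤ π s a) (s s' : S) : 0 ≤ policyTransition T π s s' :=
  sum_nonneg fun a _ => mul_nonneg (hπ s a) (hT s a s')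

variable [Fintype S]

theorem sum_policyTransition {T : S → A → S → ℝ} (hTsum : ∀ s a, ∑ s', T s a s' = 1)
    {π : S → A → ℝ} (hπ : ∀ s, ∑ a, π s a = 1) (s : S) : ∑ s', policyTransition T π s s' = 1 := by
  simp only [policyTransition, of_apply]
  rw [sum_comm]
  simp only [← mul_sum, hTsum, mul_one, hπ]

def IsBellmanFlow (γ : ℝ) (μ0 : S → ℝ) (T : S → A → S → ℝ) (d : S → A → ℝ) : Prop :=
  ∀ s, ∑ a, d s a = (1 - γ) * μ0 s + γ * ∑ sb, ∑ ab, T sb ab s * d sb ab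

def flowResidual (γ : ℝ) (μ0 : S → ℝ) (T : S → A → S → ℝ) (d : S → A → ℝ) : S → ℝ :=
  fun s => (1 - γ) * μ0 s + γ * ∑ sb, ∑ ab, T sb ab s * d sb ab - ∑ a, d s a

noncomputable def regularizedReturn (α : ℝ) (f : ℝ → ℝ) (dD rhat d : S → A → ℝ) : ℝ :=
  ∑ s, ∑ a, d s a * rhat s a - α * ∑ s, ∑ a, dD s a * f (d s a / dD s a)

noncomputable def flowLagrangian (γ α : ℝ) (f : ℝ → ℝ) (μ0 : S → ℝ) (T : S → A → S → ℝ)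
    (dD rhat : S → A → ℝ) (V : S → ℝ) (d : S → A → ℝ) : ℝ :=
  regularizedReturn α f dD rhat d + ∑ s, V s * flowResidual γ μ0 T d s

def flowHypograph (γ α : ℝ) (f : ℝ → ℝ) (μ0 : S → ℝ) (T : S → A → S → ℝ)
    (dD rhat : S → A → ℝ) : Set ((S → ℝ) × ℝ) :=
  {p | ∃ d : S → A → ℝ, (∀ s a, 0 ≤ d s a) ∧ flowResidual γ μ0 T d = p.1 ∧
    p.2 ≤ regularizedReturn α f dD rhat d}

variable {γ α : ℝ} {f : ℝ → ℝ} {μ0 : S → ℝ} {T : S → A → S → ℝ} {dD rhat : S → A → ℝ}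

theorem flowResidual_eq_zero_iff {d : S → A → ℝ} :
    flowResidual γ μ0 T d = 0 ↔ IsBellmanFlow γ μ0 T d := by
  simp only [funext_iff, flowResidual, Pi.zero_apply, IsBellmanFlow]
  exact forall_congr' fun s => by constructor <;> intro h <;> linarith

theorem flowLagrangian_of_isBellmanFlow {d : S → A → ℝ} (hd : IsBellmanFlow γ μ0 T d)
    (V : S → ℝ) : flowLagrangian γ α f μ0 T dD rhat V d = regularizedReturn α f dD rhat d := by
  simp only [flowLagrangian, flowResidual_eq_zero_iff.2 hd, Pi.zero_apply, mul_zero, sum_const_zero,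
    add_zero]

theorem flowResidual_smul_add_smul {d₁ d₂ : S → A → ℝ} {a b : ℝ} (hab : a + b = 1) :
    flowResidual γ μ0 T (a • d₁ + b • d₂) =
      a • flowResidual γ μ0 T d₁ + b • flowResidual γ μ0 T d₂ := by
  funext s
  simp only [flowResidual, Pi.add_apply, Pi.smul_apply, smul_eq_mul, mul_add, sum_add_distrib,
    mul_left_comm _ a, mul_left_comm _ b, ← mul_sum]
  linear_combination -(1 - γ) * μ0 s * hab

theorem flowResidual_occupancy {π : S → A → ℝ} (hπ : ∀ s, ∑ a, π s a = 1) (y : S → ℝ) :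
    flowResidual γ μ0 T (occupancy π y) =
      (1 - γ) • μ0 + γ • (y ᵥ* policyTransition T π) - y := by
  funext s
  simp only [flowResidual, occupancy_apply, policyTransition, vecMul, dotProduct, of_apply,
    Pi.add_apply, Pi.sub_apply, Pi.smul_apply, smul_eq_mul, ← sum_mul, hπ, one_mul, mul_sum]
  congr 3
  ext sb
  exact sum_congr rfl fun a _ => by ring

theorem concaveOn_regularizedReturn (hα : 0 ≤ α) (hf : ConvexOn ℝ (Set.Ici 0) f)
    (hdD : ∀ s a, 0 < dD s a) :
    ConcaveOn ℝ {d : S → A → ℝ | ∀ s a, 0 ≤ d s a} (regularizedReturn α f dD rhat) := by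
  refine ⟨fun d₁ h₁ d₂ h₂ a b ha hb hab s a' => ?_, fun d₁ h₁ d₂ h₂ a b ha hb hab => ?_⟩
  · simp only [Pi.add_apply, Pi.smul_apply, smul_eq_mul]
    exact add_nonneg (mul_nonneg ha (h₁ s a')) (mul_nonneg hb (h₂ s a'))
  have hpersp : ∑ s, ∑ a', dD s a' * f ((a • d₁ + b • d₂) s a' / dD s a') ≤
      a * ∑ s, ∑ a', dD s a' * f (d₁ s a' / dD s a') +
        b * ∑ s, ∑ a', dD s a' * f (d₂ s a' / dD s a') := by
    simp only [mul_sum, ← sum_add_distrib]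
    exact sum_le_sum fun s _ => sum_le_sum fun a' _ =>
      hf.perspective_combo_le (hdD s a') (h₁ s a') (h₂ s a') ha hb hab
  have hlin : ∑ s, ∑ a', (a • d₁ + b • d₂) s a' * rhat s a' =
      a * ∑ s, ∑ a', d₁ s a' * rhat s a' + b * ∑ s, ∑ a', d₂ s a' * rhat s a' := by
    simp only [mul_sum, ← sum_add_distrib, Pi.add_apply, Pi.smul_apply, smul_eq_mul]
    exact sum_congr rfl fun s _ => sum_congr rfl fun a' _ => by ring
  simp only [regularizedReturn, smul_eq_mul, hlin]
  nlinarith [mul_le_mul_of_nonneg_left hpersp hα]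

theorem convex_flowHypograph (hα : 0 ≤ α) (hf : ConvexOn ℝ (Set.Ici 0) f)
    (hdD : ∀ s a, 0 < dD s a) : Convex ℝ (flowHypograph γ α f μ0 T dD rhat) := by
  rintro ⟨_, u₁⟩ ⟨d₁, h₁, rfl, hu₁⟩ ⟨_, u₂⟩ ⟨d₂, h₂, rfl, hu₂⟩ a b ha hb hab
  have hJ := concaveOn_regularizedReturn (rhat := rhat) hα hf hdD
  refine ⟨a • d₁ + b • d₂, hJ.1 h₁ h₂ ha hb hab, flowResidual_smul_add_smul hab, ?_⟩
  calc a • u₁ + b • u₂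
      ≤ a • regularizedReturn α f dD rhat d₁ + b • regularizedReturn α f dD rhat d₂ :=
        add_le_add (mul_le_mul_of_nonneg_left hu₁ ha) (mul_le_mul_of_nonneg_left hu₂ hb)
    _ ≤ _ := hJ.2 h₁ h₂ ha hb hab

theorem continuousAt_regularizedReturn_occupancy (hα : 0 ≤ α) (hf : ConvexOn ℝ (Set.Ici 0) f)
    (hdD : ∀ s a, 0 < dD s a) {π : S → A → ℝ} (hπ : ∀ s a, 0 ≤ π s a) {y₀ : S → ℝ}
    (hy₀ : ∀ s, 0 < y₀ s) :
    ContinuousAt (fun y => regularizedReturn α f dD rhat (occupancy π y)) y₀ := by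
  have hU : IsOpen (Set.univ.pi fun _ : S => Set.Ioi (0 : ℝ)) :=
    isOpen_set_pi Set.finite_univ fun _ _ => isOpen_Ioi
  have hconc := ((concaveOn_regularizedReturn (rhat := rhat) hα hf hdD).comp_linearMap
      (occupancy π)).subset
    (show Set.univ.pi (fun _ => Set.Ioi 0) ⊆ _ from
      fun y hy s a => mul_nonneg (hπ s a) (hy s (Set.mem_univ s)).le)
    (convex_pi fun _ _ => convex_Ioi 0)
  exact (hconc.continuousOn hU).continuousAt (hU.mem_nhds fun s _ => hy₀ s)

theorem exists_mem_interior_flowHypograph (hγ : |γ| < 1) (hα : 0 ≤ α)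
    (hT : ∀ s a s', 0 ≤ T s a s') (hTsum : ∀ s a, ∑ s', T s a s' = 1)
    (hf : ConvexOn ℝ (Set.Ici 0) f) (hdD : ∀ s a, 0 < dD s a) {d₀ : S → A → ℝ}
    (hd₀ : ∀ s a, 0 ≤ d₀ s a) (hflow : IsBellmanFlow γ μ0 T d₀) (hpos : ∀ s, 0 < ∑ a, d₀ s a) :
    ∃ u₀, ((0 : S → ℝ), u₀) ∈ interior (flowHypograph γ α f μ0 T dD rhat) := by
  set J := regularizedReturn α f dD rhat
  set y₀ : S → ℝ := fun s => ∑ a, d₀ s a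
  set π : S → A → ℝ := fun s a => d₀ s a / y₀ s
  have hπ : ∀ s a, 0 ≤ π s a := fun s a => div_nonneg (hd₀ s a) (hpos s).le
  have hπ1 : ∀ s, ∑ a, π s a = 1 := fun s => by rw [← sum_div, div_self (hpos s).ne']
  have hocc : occupancy π y₀ = d₀ := by
    funext s a; exact div_mul_cancel₀ _ (hpos s).ne'
  set N := γ • (policyTransition T π).vecMulLinear - LinearMap.id
  have hresid : ∀ z, flowResidual γ μ0 T (occupancy π (y₀ + z)) = N z := by
    intro z
    have h₀ := flowResidual_eq_zero_iff.2 (hocc ▸ hflow)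
    rw [flowResidual_occupancy hπ1] at h₀ ⊢
    rw [add_vecMul, ← sub_eq_zero, ← h₀]
    simp only [N, LinearMap.sub_apply, LinearMap.smul_apply, LinearMap.id_apply,
      coe_vecMulLinear]
    module
  have hW : {z : S → ℝ | (∀ s, 0 < y₀ s + z s) ∧ J d₀ - 1 < J (occupancy π (y₀ + z))} ∈ 𝓝 0 := by
    have hlim : Tendsto (fun z : S → ℝ => y₀ + z) (𝓝 0) (𝓝 y₀) := by
      simpa using (tendsto_id (x := 𝓝 (0 : S → ℝ))).const_add y₀
    refine (eventually_all.2 fun s => ?_).and (hlim.eventually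
      ((continuousAt_regularizedReturn_occupancy hα hf hdD hπ hpos).eventually (lt_mem_nhds ?_)))
    · exact ((continuous_apply s).tendsto _).comp hlim |>.eventually (lt_mem_nhds (hpos s))
    · change J d₀ - 1 < J (occupancy π y₀)
      rw [hocc]; linarith
  have hNW := (LinearMap.isOpenMap_of_finiteDimensional N
    (Matrix.surjective_smul_vecMulLinear_sub_id (policyTransition_nonneg hT hπ)
      (sum_policyTransition hTsum hπ1) hγ)).image_mem_nhds hW
  rw [map_zero] at hNW
  refine ⟨J d₀ - 2, mem_interior_iff_mem_nhds.2 (mem_of_superset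
    (prod_mem_nhds hNW (Iio_mem_nhds (show J d₀ - 2 < J d₀ - 1 by linarith))) ?_)⟩
  rintro ⟨_, u⟩ ⟨⟨z, ⟨hz_pos, hz_J⟩, rfl⟩, hu⟩
  exact ⟨occupancy π (y₀ + z), fun s a => mul_nonneg (hπ s a) (hz_pos s).le, hresid z,
    (lt_trans hu hz_J).le⟩

theorem exists_flowLagrangian_le_sSup (hγ : |γ| < 1) (hα : 0 ≤ α)
    (hT : ∀ s a s', 0 ≤ T s a s') (hTsum : ∀ s a, ∑ s', T s a s' = 1)
    (hf : ConvexOn ℝ (Set.Ici 0) f) (hdD : ∀ s a, 0 < dD s a) {d₀ : S → A → ℝ}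
    (hd₀ : ∀ s a, 0 ≤ d₀ s a) (hflow : IsBellmanFlow γ μ0 T d₀) (hpos : ∀ s, 0 < ∑ a, d₀ s a) :
    ∃ V : S → ℝ, ∀ d : S → A → ℝ, (∀ s a, 0 ≤ d s a) →
      (flowLagrangian γ α f μ0 T dD rhat V d : EReal) ≤
        sSup ((fun d => (regularizedReturn α f dD rhat d : EReal)) ''
          {d | (∀ s a, 0 ≤ d s a) ∧ IsBellmanFlow γ μ0 T d}) := by
  classical
  set σ := sSup ((fun d => (regularizedReturn α f dD rhat d : EReal)) ''
    {d | (∀ s a, 0 ≤ d s a) ∧ IsBellmanFlow γ μ0 T d})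
  rcases eq_or_ne σ ⊤ with hσ | hσ
  · exact ⟨0, fun _ _ => hσ ▸ le_top⟩
  have hσ_bot : σ ≠ ⊥ := ne_bot_of_le_ne_bot (EReal.coe_ne_bot _) (le_sSup ⟨d₀, ⟨hd₀, hflow⟩, rfl⟩)
  rw [← EReal.coe_toReal hσ hσ_bot]
  have hP : ∀ u, ((0 : S → ℝ), u) ∈ flowHypograph γ α f μ0 T dD rhat → u ≤ σ.toReal := by
    rintro u ⟨d, hd, hres, hu⟩
    have h : (regularizedReturn α f dD rhat d : EReal) ≤ σ :=
      le_sSup ⟨d, ⟨hd, flowResidual_eq_zero_iff.1 hres⟩, rfl⟩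
    rw [← EReal.coe_toReal hσ hσ_bot, EReal.coe_le_coe_iff] at h
    exact hu.trans h
  obtain ⟨u₀, hu₀⟩ := exists_mem_interior_flowHypograph (rhat := rhat) hγ hα hT hTsum hf hdD hd₀
    hflow hpos
  obtain ⟨φ, hφ⟩ := (convex_flowHypograph hα hf hdD).exists_forall_snd_add_le_of_mem_interior hu₀ hP
  refine ⟨fun s => φ fun j => if s = j then 1 else 0, fun d hd => EReal.coe_le_coe_iff.2 ?_⟩
  have h := hφ (flowResidual γ μ0 T d, regularizedReturn α f dD rhat d) ⟨d, hd, rfl, le_rfl⟩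
  rw [← φ.coe_coe, φ.toLinearMap.pi_apply_eq_sum_univ] at h
  simpa only [flowLagrangian, ContinuousLinearMap.coe_coe, smul_eq_mul, mul_comm] using h

end MDP

theorem bellman_flow_strong_duality_general {S A : Type*} [Fintype S] [Fintype A]
    (γ α : ℝ) (hγ : γ ∈ Set.Ioo (0 : ℝ) 1) (hα : 0 < α)
    (μ0 : S → ℝ)
    (T : S → A → S → ℝ) (hT : ∀ s a s', 0 ≤ T s a s')
    (hTsum : ∀ s a, ∑ s', T s a s' = 1)
    (f : ℝ → ℝ) (hf : ConvexOn ℝ (Set.Ici 0) f)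
    (dD : S → A → ℝ) (hdD : ∀ s a, 0 < dD s a)
    (rhat : S → A → ℝ)
    (hSlater : ∃ d : S → A → ℝ, (∀ s a, 0 ≤ d s a) ∧
      (∀ s, ∑ a, d s a =
        (1 - γ) * μ0 s + γ * ∑ sb, ∑ ab, T sb ab s * d sb ab) ∧
      (∀ s, 0 < ∑ a, d s a)) :
    sSup ((fun d : S → A → ℝ =>
        ((∑ s, ∑ a, d s a * rhat s a
          - α * ∑ s, ∑ a, dD s a * f (d s a / dD s a) : ℝ) : EReal)) ''
      {d : S → A → ℝ | (∀ s a, 0 ≤ d s a) ∧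
        ∀ s, ∑ a, d s a =
          (1 - γ) * μ0 s + γ * ∑ sb, ∑ ab, T sb ab s * d sb ab})
    = ⨅ V : S → ℝ, ⨆ d : {d : S → A → ℝ // ∀ s a, 0 ≤ d s a},
        ((∑ s, ∑ a, (d : S → A → ℝ) s a * rhat s a
          - α * ∑ s, ∑ a, dD s a * f ((d : S → A → ℝ) s a / dD s a)
          + ∑ s, V s * ((1 - γ) * μ0 s
              + γ * (∑ sb, ∑ ab, T sb ab s * (d : S → A → ℝ) sb ab)
              - ∑ a, (d : S → A → ℝ) s a) : ℝ) : EReal) := by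
  obtain ⟨d₀, hd₀, hflow, hpos⟩ := hSlater
  have hγ_abs : |γ| < 1 := abs_lt.2 ⟨by linarith [hγ.1], hγ.2⟩
  exact sSup_image_eq_iInf_iSup_of_exists_le (K := {d : S → A → ℝ | ∀ s a, 0 ≤ d s a})
    (F := {d | (∀ s a, 0 ≤ d s a) ∧ IsBellmanFlow γ μ0 T d}) (fun d hd => hd.1)
    (J := fun d => (regularizedReturn α f dD rhat d : EReal))
    (L := fun V d => (flowLagrangian γ α f μ0 T dD rhat V d : EReal))
    (fun V d hd => by rw [flowLagrangian_of_isBellmanFlow hd.2])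
    (exists_flowLagrangian_le_sSup hγ_abs hα.le hT hTsum hf hdD hd₀ hflow hpos)

/-- If there exists a nonnegative solution of the Bellman flow constraint with
strictly positive state marginals (Slater's condition), then strong duality holds
for `max_{d ≥ 0, flow} ∑ d·r̂ − α D_f(d‖d^D)`: its optimal value equals
`min_V max_{d ≥ 0}` of the Lagrangian. -/
theorem bellman_flow_strong_duality {S A : Type*} [Fintype S] [Fintype A]
    (γ α : ℝ) (hγ : γ ∈ Set.Ioo (0 : ℝ) 1) (hα : 0 < α)
    (μ0 : S → ℝ) (hμ0 : ∀ s, 0 ≤ μ0 s) (hμ0sum : ∑ s, μ0 s = 1)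
    (T : S → A → S → ℝ) (hT : ∀ s a s', 0 ≤ T s a s')
    (hTsum : ∀ s a, ∑ s', T s a s' = 1)
    (f : ℝ → ℝ) (hf : ConvexOn ℝ (Set.Ici 0) f)
    (dD : S → A → ℝ) (hdD : ∀ s a, 0 < dD s a)
    (rhat : S → A → ℝ)
    (hSlater : ∃ d : S → A → ℝ, (∀ s a, 0 ≤ d s a) ∧
      (∀ s, ∑ a, d s a =
        (1 - γ) * μ0 s + γ * ∑ sb, ∑ ab, T sb ab s * d sb ab) ∧
      (∀ s, 0 < ∑ a, d s a)) :
    sSup ((fun d : S → A → ℝ =>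
        ((∑ s, ∑ a, d s a * rhat s a
          - α * ∑ s, ∑ a, dD s a * f (d s a / dD s a) : ℝ) : EReal)) ''
      {d : S → A → ℝ | (∀ s a, 0 ≤ d s a) ∧
        ∀ s, ∑ a, d s a =
          (1 - γ) * μ0 s + γ * ∑ sb, ∑ ab, T sb ab s * d sb ab})
    = ⨅ V : S → ℝ, ⨆ d : {d : S → A → ℝ // ∀ s a, 0 ≤ d s a},
        ((∑ s, ∑ a, (d : S → A → ℝ) s a * rhat s a
          - α * ∑ s, ∑ a, dD s a * f ((d : S → A → ℝ) s a / dD s a)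
          + ∑ s, V s * ((1 - γ) * μ0 s
              + γ * (∑ sb, ∑ ab, T sb ab s * (d : S → A → ℝ) sb ab)
              - ∑ a, (d : S → A → ℝ) s a) : ℝ) : EReal) :=
  bellman_flow_strong_duality_general γ α hγ hα μ0 T hT hTsum f hf dD hdD rhat hSlater
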